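/- arXiv:2110.05939 — 6 statements merged into one kernel-verified Lean document; each statement's English description precedes it below -/
import Mathlib

section
/- In a finite game admitting an ordinal potential, there is no infinite improvement path; that is, there is no infinite sequence of strategy profiles y^0, y^1, y^2, … such that each consecutive pair is an improvement step. -/
theorem not_forall_lt_succ_of_finite {α β : Type*} [Finite α] [Preorder β] (f : α → β)
    (seq : ℕ → α) : ¬ ∀ n, f (seq n) < f (seq (n + 1)) := fun h =>
  not_injective_infinite_finite seq (strictMono_nat_of_lt_succ (f := f ∘ seq) h).injective.of_comp

theorem no_infinite_improvement_path_general
    {I : Type*} [Fintype I] (Y : I → Type*) [∀ i, Fintype (Y i)]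
    (U : I → (∀ i, Y i) → ℝ) (φ : (∀ i, Y i) → ℝ)
    (hpot : ∀ (i : I) (y y' : ∀ i, Y i), (∀ j, j ≠ i → y' j = y j) →
      (U i y' > U i y ↔ φ y' > φ y)) :
    ¬ ∃ seq : ℕ → (∀ i, Y i), ∀ n : ℕ, ∃ i : I,
        (∀ j, j ≠ i → seq (n + 1) j = seq n j) ∧ U i (seq (n + 1)) > U i (seq n) := by
  rintro ⟨seq, hstep⟩
  have potential_lt_succ : ∀ n, φ (seq n) < φ (seq (n + 1)) := fun n => by
    obtain ⟨i, hothers, hU⟩ := hstep n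
    exact (hpot i (seq n) (seq (n + 1)) hothers).mp hU
  exact not_forall_lt_succ_of_finite φ seq potential_lt_succ

/-- In a finite game admitting an ordinal potential, there is no infinite improvement
path: no infinite sequence of strategy profiles in which each consecutive pair is an
improvement step (i.e. the two profiles differ only in the coordinate of some player `i`
and that player's utility strictly increases). -/
theorem no_infinite_improvement_path
    {I : Type*} [Fintype I] (Y : I → Type*) [∀ i, Fintype (Y i)] [∀ i, Nonempty (Y i)]
    (U : I → (∀ i, Y i) → ℝ) (φ : (∀ i, Y i) → ℝ)
    (hpot : ∀ (i : I) (y y' : ∀ i, Y i), (∀ j, j ≠ i → y' j = y j) →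
      (U i y' > U i y ↔ φ y' > φ y)) :
    ¬ ∃ seq : ℕ → (∀ i, Y i), ∀ n : ℕ, ∃ i : I,
        (∀ j, j ≠ i → seq (n + 1) j = seq n j) ∧ U i (seq (n + 1)) > U i (seq n) :=
  no_infinite_improvement_path_general Y U φ hpot
end

section
/- In a finite game admitting an ordinal potential φ, any strategy profile that maximizes φ over all profiles is a pure Nash equilibrium; in particular, every finite ordinal potential game possesses a pure Nash equilibrium. -/
open Function

def IsPureNashEquilibrium {I α : Type*} [DecidableEq I] {Y : I → Type*} [LE α]
    (U : I → (∀ i, Y i) → α) (y : ∀ i, Y i) : Prop :=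
  ∀ (i : I) (y'i : Y i), U i (update y i y'i) ≤ U i y

section PotentialGame

variable {I α β : Type*} [DecidableEq I] {Y : I → Type*} [LinearOrder α]
  {U : I → (∀ i, Y i) → α} {φ : (∀ i, Y i) → β}

theorem isPureNashEquilibrium_of_forall_le [Preorder β]
    (hpot : ∀ (i : I) (y : ∀ i, Y i) (y'i : Y i),
      U i y < U i (update y i y'i) → φ y < φ (update y i y'i))
    {y : ∀ i, Y i} (hmax : ∀ y', φ y' ≤ φ y) : IsPureNashEquilibrium U y :=
  fun i y'i => not_lt.1 fun hgain => (hpot i y y'i hgain).not_ge (hmax _)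

theorem exists_isPureNashEquilibrium [LinearOrder β] [Finite I] [∀ i, Finite (Y i)]
    [∀ i, Nonempty (Y i)]
    (hpot : ∀ (i : I) (y : ∀ i, Y i) (y'i : Y i),
      U i y < U i (update y i y'i) → φ y < φ (update y i y'i)) :
    ∃ y, IsPureNashEquilibrium U y :=
  let ⟨y, hmax⟩ := Finite.exists_max φ
  ⟨y, isPureNashEquilibrium_of_forall_le hpot hmax⟩

end PotentialGame

/-- In a finite game admitting an ordinal potential `φ`, any strategy profile that
maximizes `φ` over all profiles is a pure Nash equilibrium; in particular, every finite
ordinal potential game possesses a pure Nash equilibrium. -/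
theorem potential_maximizer_is_nash
    {I : Type*} [Fintype I] [DecidableEq I]
    (Y : I → Type*) [∀ i, Fintype (Y i)] [∀ i, Nonempty (Y i)]
    (U : I → (∀ i, Y i) → ℝ) (φ : (∀ i, Y i) → ℝ)
    (hpot : ∀ (i : I) (y : ∀ i, Y i) (y'i : Y i),
      (U i (Function.update y i y'i) > U i y ↔ φ (Function.update y i y'i) > φ y)) :
    (∀ y : ∀ i, Y i, (∀ y' : ∀ i, Y i, φ y' ≤ φ y) →
      ∀ (i : I) (y'i : Y i), U i (Function.update y i y'i) ≤ U i y) ∧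
    (∃ y : ∀ i, Y i, ∀ (i : I) (y'i : Y i), U i (Function.update y i y'i) ≤ U i y) := by
  have hgain : ∀ i y y'i, U i y < U i (update y i y'i) → φ y < φ (update y i y'i) :=
    fun i y y'i => (hpot i y y'i).1
  exact ⟨fun _ hmax => isPureNashEquilibrium_of_forall_le hgain hmax,
    exists_isPureNashEquilibrium hgain⟩
end

section
/- In a finite game admitting an ordinal potential, from every strategy profile y there exists a finite improvement path starting at y and ending at a pure Nash equilibrium of the game. -/
/-! Every improvement step strictly raises the ordinal potential, which takes only finitely
many values on the finite set of profiles, so improvement steps cannot go on forever: following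
them from any profile ends after finitely many steps at a profile admitting no improvement
step, i.e. at a pure Nash equilibrium. -/

theorem WellFounded.exists_chain_to_maximal {α : Type*} {r : α → α → Prop}
    (hr : WellFounded (flip r)) (a : α) :
    ∃ (L : ℕ) (p : ℕ → α),
      p 0 = a ∧ (∀ n < L, r (p n) (p (n + 1))) ∧ ∀ b, ¬ r (p L) b := by
  induction a using hr.induction with
  | _ a ih =>
    by_cases hmax : ∃ b, r a b
    · obtain ⟨b, hab⟩ := hmax
      obtain ⟨L, p, hp0, hchain, hend⟩ := ih b hab
      refine ⟨L + 1, fun | 0 => a | n + 1 => p n, rfl, ?_, hend⟩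
      rintro (_ | n) hn
      · simpa [hp0] using hab
      · exact hchain n (by omega)
    · exact ⟨0, fun _ => a, rfl, by simp, fun b hab => hmax ⟨b, hab⟩⟩

namespace FiniteGame

variable {I : Type*} {Y : I → Type*} (U : I → (∀ i, Y i) → ℝ)

def IsImprovementStep (y y' : ∀ i, Y i) : Prop :=
  ∃ i, (∀ j, j ≠ i → y' j = y j) ∧ U i y' > U i y

variable [DecidableEq I]

def IsNashEquilibrium (y : ∀ i, Y i) : Prop :=
  ∀ (i : I) (y'i : Y i), U i (Function.update y i y'i) ≤ U i y

def IsOrdinalPotential (φ : (∀ i, Y i) → ℝ) : Prop :=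
  ∀ (i : I) (y : ∀ i, Y i) (y'i : Y i),
    (U i (Function.update y i y'i) > U i y ↔ φ (Function.update y i y'i) > φ y)

variable {U}

theorem isNashEquilibrium_of_forall_not_isImprovementStep {y : ∀ i, Y i}
    (h : ∀ y', ¬ IsImprovementStep U y y') : IsNashEquilibrium U y := by
  intro i y'i
  by_contra! hlt
  exact h _ ⟨i, fun j hj => Function.update_of_ne hj _ _, hlt⟩

theorem IsOrdinalPotential.lt_of_isImprovementStep {φ : (∀ i, Y i) → ℝ}
    (hφ : IsOrdinalPotential U φ) {y y' : ∀ i, Y i} (h : IsImprovementStep U y y') :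
    φ y < φ y' := by
  obtain ⟨i, hagree, hlt⟩ := h
  have hy' : Function.update y i (y' i) = y' := by
    ext j
    rcases eq_or_ne j i with rfl | hj
    · simp
    · simp [hj, hagree j hj]
  rw [← hy'] at hlt ⊢
  exact (hφ i y (y' i)).1 hlt

theorem IsOrdinalPotential.wellFounded_flip_isImprovementStep [Finite (∀ i, Y i)]
    {φ : (∀ i, Y i) → ℝ} (hφ : IsOrdinalPotential U φ) :
    WellFounded (flip (IsImprovementStep U)) :=
  Subrelation.wf (fun h => hφ.lt_of_isImprovementStep h)
    (Set.wellFoundedOn_range.mp (Set.finite_range φ).wellFoundedOn :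
      WellFounded (Function.onFun (· > ·) φ))

end FiniteGame

open FiniteGame in
theorem improvement_path_to_nash_general
    {I : Type*} [Fintype I] [DecidableEq I]
    (Y : I → Type*) [∀ i, Fintype (Y i)]
    (U : I → (∀ i, Y i) → ℝ) (φ : (∀ i, Y i) → ℝ)
    (hpot : ∀ (i : I) (y : ∀ i, Y i) (y'i : Y i),
      (U i (Function.update y i y'i) > U i y ↔ φ (Function.update y i y'i) > φ y)) :
    ∀ y : ∀ i, Y i, ∃ (L : ℕ) (p : ℕ → ∀ i, Y i),
      p 0 = y ∧
      (∀ n < L, ∃ i : I,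
        (∀ j, j ≠ i → p (n + 1) j = p n j) ∧ U i (p (n + 1)) > U i (p n)) ∧
      (∀ (i : I) (y'i : Y i), U i (Function.update (p L) i y'i) ≤ U i (p L)) := by
  intro y
  have hφ : IsOrdinalPotential U φ := hpot
  obtain ⟨L, p, hp0, hpath, hend⟩ :=
    hφ.wellFounded_flip_isImprovementStep.exists_chain_to_maximal y
  exact ⟨L, p, hp0, hpath, isNashEquilibrium_of_forall_not_isImprovementStep hend⟩

/-- In a finite game admitting an ordinal potential, from every strategy profile `y`
there is a finite improvement path starting at `y` and ending at a pure Nash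
equilibrium of the game. -/
theorem improvement_path_to_nash
    {I : Type*} [Fintype I] [DecidableEq I]
    (Y : I → Type*) [∀ i, Fintype (Y i)] [∀ i, Nonempty (Y i)]
    (U : I → (∀ i, Y i) → ℝ) (φ : (∀ i, Y i) → ℝ)
    (hpot : ∀ (i : I) (y : ∀ i, Y i) (y'i : Y i),
      (U i (Function.update y i y'i) > U i y ↔ φ (Function.update y i y'i) > φ y)) :
    ∀ y : ∀ i, Y i, ∃ (L : ℕ) (p : ℕ → ∀ i, Y i),
      p 0 = y ∧
      (∀ n < L, ∃ i : I,
        (∀ j, j ≠ i → p (n + 1) j = p n j) ∧ U i (p (n + 1)) > U i (p n)) ∧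
      (∀ (i : I) (y'i : Y i), U i (Function.update (p L) i y'i) ≤ U i (p L)) :=
  improvement_path_to_nash_general Y U φ hpot
end

section
/- There exist a mixed strategy z* in the standard simplex of ℝ^n and a column j* that is a best response to z* such that for every z in the standard simplex and every column j that is a best response to z, the IP's expected payoff satisfies Σ_i z*_i · A i j* ≥ Σ_i z_i · A i j. In other words, the IP's expected payoff over all (mixed strategy, opponent pure best response) pairs attains a maximum. -/
/-!
The set of pairs `(z, j)` with `z` a mixed strategy and `j` a best response to `z` is the graph
of the best-response correspondence. Being cut out of the compact space `stdSimplex × columns`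
by finitely many non-strict inequalities between continuous functions, it is compact; it is
nonempty since every `z` has a best response among finitely many columns. The continuous payoff
`(z, j) ↦ (z ᵥ* A) j` of the IP therefore attains its maximum on it.
-/

open Matrix

variable {ι κ : Type*} [Fintype ι]

def IsBestResponse {R : Type*} [NonUnitalNonAssocSemiring R] [LE R]
    (B : Matrix ι κ R) (z : ι → R) (j : κ) : Prop :=
  ∀ k, (z ᵥ* B) k ≤ (z ᵥ* B) j

theorem exists_isBestResponse {R : Type*} [NonUnitalNonAssocSemiring R] [LinearOrder R]
    [Finite κ] [Nonempty κ] (B : Matrix ι κ R) (z : ι → R) :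
    ∃ j, IsBestResponse B z j :=
  Finite.exists_max _

def bestResponseGraph (B : Matrix ι κ ℝ) : Set ((ι → ℝ) × κ) :=
  {p | p.1 ∈ stdSimplex ℝ ι ∧ IsBestResponse B p.1 p.2}

theorem bestResponseGraph_nonempty [Nonempty ι] [Finite κ] [Nonempty κ] (B : Matrix ι κ ℝ) :
    (bestResponseGraph B).Nonempty := by
  classical
  obtain ⟨i⟩ := ‹Nonempty ι›
  obtain ⟨j, hj⟩ := exists_isBestResponse B (Pi.single i 1)
  exact ⟨(Pi.single i 1, j), single_mem_stdSimplex ℝ i, hj⟩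

section Topology

variable [TopologicalSpace κ] [DiscreteTopology κ]

theorem continuous_vecMul_apply (M : Matrix ι κ ℝ) :
    Continuous fun p : (ι → ℝ) × κ => (p.1 ᵥ* M) p.2 :=
  continuous_prod_of_discrete_right.2 fun j =>
    (continuous_apply j).comp (continuous_id.matrix_vecMul continuous_const)

theorem isClosed_bestResponseGraph (B : Matrix ι κ ℝ) : IsClosed (bestResponseGraph B) := by
  have hBR : IsClosed {p : (ι → ℝ) × κ | IsBestResponse B p.1 p.2} := by
    simp only [IsBestResponse, Set.ofPred_forall]
    exact isClosed_iInter fun k =>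
      isClosed_le ((continuous_apply k).comp (continuous_fst.matrix_vecMul continuous_const))
        (continuous_vecMul_apply B)
  exact ((isClosed_stdSimplex ℝ ι).preimage continuous_fst).inter hBR

theorem isCompact_bestResponseGraph [Finite κ] (B : Matrix ι κ ℝ) :
    IsCompact (bestResponseGraph B) :=
  ((isCompact_stdSimplex ℝ ι).prod isCompact_univ).of_isClosed_subset
    (isClosed_bestResponseGraph B) fun _ hp => ⟨hp.1, trivial⟩

end Topology

/-- There exist a mixed strategy `z*` in the standard simplex and a column `j*` that is a
best response to `z*` such that for every `z` in the simplex and every best response `j`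
to `z`, the IP's expected payoff at `(z*, j*)` is at least that at `(z, j)`. -/
theorem ip_payoff_attains_max
    (n m : ℕ) (hn : 1 ≤ n) (hm : 1 ≤ m)
    (A B : Matrix (Fin n) (Fin m) ℝ) :
    ∃ zstar ∈ stdSimplex ℝ (Fin n), ∃ jstar : Fin m,
      (∀ k : Fin m, ∑ i, zstar i * B i k ≤ ∑ i, zstar i * B i jstar) ∧
      ∀ z ∈ stdSimplex ℝ (Fin n), ∀ j : Fin m,
        (∀ k : Fin m, ∑ i, z i * B i k ≤ ∑ i, z i * B i j) →
        ∑ i, zstar i * A i jstar ≥ ∑ i, z i * A i j := by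
  have : Nonempty (Fin n) := ⟨⟨0, hn⟩⟩
  have : Nonempty (Fin m) := ⟨⟨0, hm⟩⟩
  obtain ⟨⟨zstar, jstar⟩, ⟨hzstar, hjstar⟩, hmax⟩ :=
    (isCompact_bestResponseGraph B).exists_isMaxOn (bestResponseGraph_nonempty B)
      (continuous_vecMul_apply A).continuousOn
  exact ⟨zstar, hzstar, jstar, hjstar, fun z hz j hj => hmax (a := (z, j)) ⟨hz, hj⟩⟩
end

section
/- For the block trajectory x with prefix length τ' ≥ T, the following hold for every n ≥ 1: the empirical frequency of the symbol 0 at time n is at least c(0)/T, i.e. #{k < n : x(k) = 0}/n ≥ c(0)/T, and for every symbol s ≠ 0, the empirical frequency of s at time n is at most c(s)/T, i.e. #{k < n : x(k) = s}/n ≤ c(s)/T. -/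
/-!
After the prefix, a symbol `s ≠ 0` occurs only at times whose phase `(k - τ') % T` lies in a
window of length `c s`, so before time `n` it occurs at most `((n - τ') / T + 1) * c s` times;
since `T ≤ τ'`, this is at most `c s * n / T`. The frequencies of all symbols sum to one, so
these upper bounds for the symbols `s ≠ 0` force the lower bound for the symbol `0`.
-/

open Finset

theorem Finset.le_of_sum_eq_of_forall_ne_le {ι M : Type*} [AddCommMonoid M] [PartialOrder M]
    [IsOrderedCancelAddMonoid M] {s : Finset ι} {f g : ι → M} {i : ι} (hi : i ∈ s)
    (hsum : ∑ j ∈ s, f j = ∑ j ∈ s, g j) (hle : ∀ j ∈ s, j ≠ i → f j ≤ g j) : g i ≤ f i := by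
  classical
  rw [← add_sum_erase s f hi, ← add_sum_erase s g hi] at hsum
  have hrest : ∑ j ∈ s.erase i, f j ≤ ∑ j ∈ s.erase i, g j :=
    sum_le_sum fun j hj => hle j (mem_of_mem_erase hj) (ne_of_mem_erase hj)
  refine le_of_add_le_add_right (a := ∑ j ∈ s.erase i, f j) ?_
  calc g i + ∑ j ∈ s.erase i, f j ≤ g i + ∑ j ∈ s.erase i, g j := by gcongr
    _ = f i + ∑ j ∈ s.erase i, f j := hsum.symm

theorem Finset.card_le_of_forall_sub_mod_mem_Ico {S : Finset ℕ} {τ n T a b : ℕ}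
    (hS : ∀ k ∈ S, τ ≤ k ∧ k < n ∧ (k - τ) % T ∈ Ico a b) :
    #S ≤ ((n - τ) / T + 1) * (b - a) := by
  have hmaps : (S : Set ℕ).MapsTo (fun k => ((k - τ) / T, (k - τ) % T))
      (range ((n - τ) / T + 1) ×ˢ Ico a b : Finset (ℕ × ℕ)) := by
    intro k hk
    obtain ⟨-, hkn, hmod⟩ := hS k hk
    rw [mem_coe, mem_product, mem_range, Nat.lt_succ_iff]
    exact ⟨Nat.div_le_div_right (by omega), hmod⟩
  have hinj : (S : Set ℕ).InjOn fun k => ((k - τ) / T, (k - τ) % T) := by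
    intro k hk k' hk' h
    obtain ⟨hdiv, hmod⟩ : (k - τ) / T = (k' - τ) / T ∧ (k - τ) % T = (k' - τ) % T :=
      Prod.ext_iff.mp h
    have hsub : k - τ = k' - τ := by
      rw [← Nat.div_add_mod (k - τ) T, ← Nat.div_add_mod (k' - τ) T, hdiv, hmod]
    have := (hS k hk).1
    have := (hS k' hk').1
    omega
  simpa using card_le_card_of_injOn _ hmaps hinj

theorem card_filter_mul_le_of_sub_mod_mem_Ico {α : Type*} [DecidableEq α] {x : ℕ → α} {s : α}
    {τ T a w : ℕ} (hτ : T ≤ τ) (hprefix : ∀ k < τ, x k ≠ s)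
    (hphase : ∀ k, τ ≤ k → x k = s → (k - τ) % T ∈ Ico a (a + w)) (n : ℕ) :
    #{k ∈ range n | x k = s} * T ≤ w * n := by
  rcases le_or_gt n τ with hn | hn
  · have hempty : {k ∈ range n | x k = s} = ∅ :=
      filter_false_of_mem fun k hk => hprefix k (by simp at hk; omega)
    simp [hempty]
  · have hcard : #{k ∈ range n | x k = s} ≤ ((n - τ) / T + 1) * w := by
      rw [← Nat.add_sub_cancel_left (n := a) (m := w)]
      refine card_le_of_forall_sub_mod_mem_Ico fun k hk => ?_
      obtain ⟨hkn, hks⟩ := mem_filter.mp hk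
      have hτk : τ ≤ k := by by_contra h; exact hprefix k (by omega) hks
      exact ⟨hτk, mem_range.mp hkn, hphase k hτk hks⟩
    calc #{k ∈ range n | x k = s} * T ≤ ((n - τ) / T + 1) * w * T :=
          Nat.mul_le_mul_right T hcard
      _ = w * ((n - τ) / T * T + T) := by ring
      _ ≤ w * n := Nat.mul_le_mul_left w (by have := Nat.div_mul_le_self (n - τ) T; omega)

/-- For the block trajectory `x` (a prefix of `τ'` plays of symbol `0` followed by
indefinite repetition of the block consisting of `c 0` copies of `0`, then `c 1` copies
of `1`, …), with `τ' ≥ T := ∑ s, c s`: for every `n ≥ 1`, the empirical frequency of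
symbol `0` at time `n` is at least `c 0 / T`, and for every symbol `s ≠ 0` the empirical
frequency of `s` at time `n` is at most `c s / T`. -/
theorem block_trajectory_frequency_bounds
    (m : ℕ) (hm : 1 ≤ m) (c : Fin m → ℕ) (hT : 1 ≤ ∑ s, c s)
    (τ' : ℕ) (hτ' : ∑ s, c s ≤ τ')
    (x : ℕ → Fin m)
    (hx1 : ∀ n < τ', x n = ⟨0, hm⟩)
    (hx2 : ∀ n, τ' ≤ n →
      (∑ u ∈ Finset.univ.filter (fun u => u < x n), c u) ≤ (n - τ') % (∑ s, c s) ∧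
      (n - τ') % (∑ s, c s) < ∑ u ∈ Finset.univ.filter (fun u => u ≤ x n), c u) :
    ∀ n : ℕ, 1 ≤ n →
      ((c ⟨0, hm⟩ : ℝ) / ((∑ s, c s : ℕ) : ℝ) ≤
        (((Finset.range n).filter (fun k => x k = ⟨0, hm⟩)).card : ℝ) / (n : ℝ)) ∧
      (∀ s : Fin m, s ≠ ⟨0, hm⟩ →
        (((Finset.range n).filter (fun k => x k = s)).card : ℝ) / (n : ℝ) ≤
          (c s : ℝ) / ((∑ s, c s : ℕ) : ℝ)) := by
  intro n hn
  set T := ∑ s, c s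
  have hupper : ∀ s ≠ ⟨0, hm⟩, #{k ∈ range n | x k = s} * T ≤ c s * n := by
    intro s hs
    refine card_filter_mul_le_of_sub_mod_mem_Ico (a := ∑ u ∈ Iio s, c u) hτ'
      (fun k hk hks => hs (hks.symm.trans (hx1 k hk))) (fun k hk hks => ?_) n
    rw [mem_Ico, sum_Iio_add_eq_sum_Iic, ← filter_gt_eq_Iio, ← filter_ge_eq_Iic, ← hks]
    exact hx2 k hk
  have hlower : c ⟨0, hm⟩ * n ≤ #{k ∈ range n | x k = ⟨0, hm⟩} * T := by
    refine le_of_sum_eq_of_forall_ne_le (mem_univ _) ?_ fun s _ hs => hupper s hs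
    rw [← sum_mul, ← sum_mul, ← card_eq_sum_card_fiberwise fun _ _ => mem_univ _, card_range,
      mul_comm]
  have hT0 : (0 : ℝ) < T := by exact_mod_cast hT
  have hn0 : (0 : ℝ) < n := by exact_mod_cast hn
  refine ⟨?_, fun s hs => ?_⟩
  · rw [div_le_div_iff₀ hT0 hn0]
    exact_mod_cast hlower
  · rw [div_le_div_iff₀ hn0 hT0]
    exact_mod_cast hupper s hs
end

section
/- For the block trajectory x with prefix length τ' ≥ T and any payoff function g : Fin m → ℝ, the long-run average payoff converges: (1/n)·Σ_{k < n} g(x(k)) tends, as n → ∞, to (1/T)·Σ_{s ∈ Fin m} c(s)·g(s). -/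
/-!
After the prefix the trajectory is periodic with period `T = ∑ s, c s`, and one period plays
`s` exactly `c s` times, because the residues at which `s` is played form the interval
`[∑_{u<s} c u, ∑_{u≤s} c u)`. For an eventually periodic sequence `f` with period `T` and
period sum `P`, the defect `∑_{k<n} f k - n P / T` is itself eventually periodic, hence takes
finitely many values, so dividing by `n` gives the Cesàro limit `P / T`.
-/

open Filter Finset Topology

theorem exists_lt_add_eq_of_periodic_from {α : Type*} {f : ℕ → α} {N T : ℕ} (hT : 0 < T)
    (hf : ∀ n, N ≤ n → f (n + T) = f n) (n : ℕ) : ∃ k < N + T, f n = f k := by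
  induction n using Nat.strong_induction_on with
  | _ n ih =>
    by_cases hn : n < N + T
    · exact ⟨n, hn, rfl⟩
    · obtain ⟨k, hk, hfk⟩ := ih (n - T) (by omega)
      refine ⟨k, hk, ?_⟩
      rw [← hfk, ← hf (n - T) (by omega), Nat.sub_add_cancel (by omega)]

theorem sum_range_add_eq_of_periodic_from {M : Type*} [AddCancelCommMonoid M] {f : ℕ → M}
    {N T : ℕ} (hf : ∀ n, N ≤ n → f (n + T) = f n) {n : ℕ} (hn : N ≤ n) :
    ∑ k ∈ range T, f (n + k) = ∑ k ∈ range T, f (N + k) := by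
  induction n, hn using Nat.le_induction with
  | base => rfl
  | succ n hn ih =>
    rw [← ih]
    have hwindow := (sum_range_succ' (fun k => f (n + k)) T).symm.trans
      (sum_range_succ (fun k => f (n + k)) T)
    simp only [hf n hn, add_zero, add_left_inj, ← add_assoc] at hwindow
    exact (sum_congr rfl fun k _ => by rw [add_right_comm]).trans hwindow

theorem tendsto_average_of_periodic_from {f : ℕ → ℝ} {N T : ℕ} (hT : 0 < T)
    (hf : ∀ n, N ≤ n → f (n + T) = f n) :
    Tendsto (fun n : ℕ => (1 / (n : ℝ)) * ∑ k ∈ range n, f k) atTop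
      (𝓝 ((1 / (T : ℝ)) * ∑ k ∈ range T, f (N + k))) := by
  set a := (1 / (T : ℝ)) * ∑ k ∈ range T, f (N + k)
  set D : ℕ → ℝ := fun n => ∑ k ∈ range n, f k - n * a
  have hD : ∀ n, N ≤ n → D (n + T) = D n := by
    intro n hn
    have hTa : (T : ℝ) * a = ∑ k ∈ range T, f (N + k) := by
      simp only [a]; field_simp
    simp only [D, sum_range_add, sum_range_add_eq_of_periodic_from hf hn, ← hTa]
    push_cast; ring
  have hD_bdd : IsBoundedUnder (· ≤ ·) atTop (fun n => ‖D n‖) := by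
    refine isBoundedUnder_of ⟨∑ k ∈ range (N + T), ‖D k‖, fun n => ?_⟩
    obtain ⟨k, hk, hDk⟩ := exists_lt_add_eq_of_periodic_from hT hD n
    rw [hDk]
    exact single_le_sum (fun _ _ => norm_nonneg _) (mem_range.2 hk)
  have hlim := (tendsto_one_div_atTop_nhds_zero_nat.zero_mul_isBoundedUnder_le hD_bdd).add_const a
  rw [zero_add] at hlim
  refine hlim.congr' ?_
  filter_upwards [eventually_ne_atTop 0] with n hn
  simp only [D]
  field_simp
  ring

section Blocks

variable {ι : Type*} [Fintype ι] [LinearOrder ι] (c : ι → ℕ)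

def blockStart (s : ι) : ℕ := ∑ u ∈ univ.filter (fun u => u < s), c u

def block (s : ι) : Finset ℕ := Ico (blockStart c s) (blockStart c s + c s)

theorem sum_filter_le_eq_blockStart_add (s : ι) :
    ∑ u ∈ univ.filter (fun u => u ≤ s), c u = blockStart c s + c s := by
  have hfilter : univ.filter (fun u => u ≤ s) = insert s (univ.filter (fun u => u < s)) := by
    ext u
    simp [le_iff_lt_or_eq, or_comm]
  rw [hfilter, sum_insert (by simp), add_comm, blockStart]

theorem blockStart_add_le_sum (s : ι) : blockStart c s + c s ≤ ∑ u, c u := by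
  rw [← sum_filter_le_eq_blockStart_add]
  exact sum_le_sum_of_subset (filter_subset _ _)

theorem blockStart_add_le_blockStart {s t : ι} (h : s < t) :
    blockStart c s + c s ≤ blockStart c t := by
  rw [← sum_filter_le_eq_blockStart_add]
  refine sum_le_sum_of_subset fun u hu => ?_
  simp only [mem_filter, mem_univ, true_and] at hu ⊢
  exact hu.trans_lt h

theorem block_subset_range (s : ι) : block c s ⊆ range (∑ u, c u) := fun r hr => by
  have := blockStart_add_le_sum c s
  simp only [block, mem_Ico, mem_range] at hr ⊢
  omega

variable {c}

theorem eq_of_mem_block {s t : ι} {r : ℕ} (hs : r ∈ block c s) (ht : r ∈ block c t) : s = t := by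
  simp only [block, mem_Ico] at hs ht
  rcases lt_trichotomy s t with h | h | h
  · have := blockStart_add_le_blockStart c h; omega
  · exact h
  · have := blockStart_add_le_blockStart c h; omega

def IsBlockTrajectory (c : ι → ℕ) (τ : ℕ) (x : ℕ → ι) : Prop :=
  ∀ n, τ ≤ n → (n - τ) % ∑ u, c u ∈ block c (x n)

namespace IsBlockTrajectory

variable {τ : ℕ} {x : ℕ → ι}

theorem apply_add_period (hx : IsBlockTrajectory c τ x) {n : ℕ} (hn : τ ≤ n) :
    x (n + ∑ u, c u) = x n := by
  refine eq_of_mem_block (hx _ (by omega)) ?_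
  rw [Nat.sub_add_comm hn, Nat.add_mod_right]
  exact hx n hn

theorem filter_range_eq_block (hx : IsBlockTrajectory c τ x) (s : ι) :
    (range (∑ u, c u)).filter (fun k => x (τ + k) = s) = block c s := by
  ext k
  simp only [mem_filter]
  constructor
  · rintro ⟨hk, rfl⟩
    simpa [Nat.mod_eq_of_lt (mem_range.1 hk)] using hx (τ + k) (by omega)
  · intro hk
    have hkT := block_subset_range c s hk
    refine ⟨hkT, eq_of_mem_block ?_ hk⟩
    simpa [Nat.mod_eq_of_lt (mem_range.1 hkT)] using hx (τ + k) (by omega)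

theorem sum_range_comp_eq {M : Type*} [AddCommMonoid M] (hx : IsBlockTrajectory c τ x)
    (g : ι → M) :
    ∑ k ∈ range (∑ u, c u), g (x (τ + k)) = ∑ s, c s • g s := by
  rw [← sum_fiberwise' _ (fun k => x (τ + k)) g]
  refine sum_congr rfl fun s _ => ?_
  rw [hx.filter_range_eq_block, sum_const, block, Nat.card_Ico, Nat.add_sub_cancel_left]

end IsBlockTrajectory

end Blocks

theorem block_trajectory_average_payoff_general
    (m : ℕ) (c : Fin m → ℕ) (hT : 1 ≤ ∑ s, c s)
    (τ' : ℕ)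
    (x : ℕ → Fin m)
    (hx2 : ∀ n, τ' ≤ n →
      (∑ u ∈ Finset.univ.filter (fun u => u < x n), c u) ≤ (n - τ') % (∑ s, c s) ∧
      (n - τ') % (∑ s, c s) < ∑ u ∈ Finset.univ.filter (fun u => u ≤ x n), c u)
    (g : Fin m → ℝ) :
    Tendsto (fun n : ℕ => (1 / (n : ℝ)) * ∑ k ∈ Finset.range n, g (x k)) atTop
      (nhds ((1 / ((∑ s, c s : ℕ) : ℝ)) * ∑ s, (c s : ℝ) * g s)) := by
  have hx : IsBlockTrajectory c τ' x := fun n hn => by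
    rw [block, mem_Ico, ← sum_filter_le_eq_blockStart_add]
    exact hx2 n hn
  have hlim := tendsto_average_of_periodic_from (f := g ∘ x) hT
    fun _ hn => congrArg g (hx.apply_add_period hn)
  simpa only [Function.comp_apply, hx.sum_range_comp_eq, nsmul_eq_mul] using hlim

/-- For the block trajectory `x` (a prefix of `τ'` plays of symbol `0` followed by
indefinite repetition of the block consisting of `c 0` copies of `0`, then `c 1` copies
of `1`, …), with `τ' ≥ T := ∑ s, c s`, and any payoff function `g : Fin m → ℝ`, the
long-run average payoff `(1/n)·∑_{k<n} g (x k)` converges to `(1/T)·∑ s, c s · g s`. -/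
theorem block_trajectory_average_payoff
    (m : ℕ) (hm : 1 ≤ m) (c : Fin m → ℕ) (hT : 1 ≤ ∑ s, c s)
    (τ' : ℕ) (hτ' : ∑ s, c s ≤ τ')
    (x : ℕ → Fin m)
    (hx1 : ∀ n < τ', x n = ⟨0, hm⟩)
    (hx2 : ∀ n, τ' ≤ n →
      (∑ u ∈ Finset.univ.filter (fun u => u < x n), c u) ≤ (n - τ') % (∑ s, c s) ∧
      (n - τ') % (∑ s, c s) < ∑ u ∈ Finset.univ.filter (fun u => u ≤ x n), c u)
    (g : Fin m → ℝ) :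
    Tendsto (fun n : ℕ => (1 / (n : ℝ)) * ∑ k ∈ Finset.range n, g (x k)) atTop
      (nhds ((1 / ((∑ s, c s : ℕ) : ℝ)) * ∑ s, (c s : ℝ) * g s)) :=
  block_trajectory_average_payoff_general m c hT τ' x hx2 g
end
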